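/- Let Ω ⊆ ℝ³ be a bounded open set and let ℓ, ψ, θ : Ω → ℝ be twice continuously differentiable functions forming an orthogonal coordinate system on Ω, i.e. ∇ℓ · ∇ψ = ∇ℓ · ∇θ = ∇ψ · ∇θ = 0 and the Jacobian h = ∇ℓ · (∇ψ × ∇θ) is nonvanishing on Ω. Assume |∇ℓ| = |∇ψ| on Ω and |∇θ| = |α| on Ω for a continuous function α : Ω → ℝ. Then the vector field w = cos θ ∇ψ + sin θ ∇ℓ satisfies curl w = σ|α| w on Ω, where σ(x) = h(x)/|h(x)| is the sign of the Jacobian; in particular w is a Beltrami field in Ω. -/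

import Mathlib

noncomputable section

abbrev R3 : Type := Fin 3 → ℝ

/-- Euclidean dot product on ℝ³. -/
def dot3 (u v : R3) : ℝ := u 0 * v 0 + u 1 * v 1 + u 2 * v 2

/-- Cross product on ℝ³. -/
def cross3 (u v : R3) : R3 :=
  ![u 1 * v 2 - u 2 * v 1, u 2 * v 0 - u 0 * v 2, u 0 * v 1 - u 1 * v 0]

/-- Euclidean norm on ℝ³. -/
def norm3 (u : R3) : ℝ := Real.sqrt (dot3 u u)

/-- Partial derivative of a scalar field in the `i`-th coordinate direction. -/
def pd (i : Fin 3) (f : R3 → ℝ) (x : R3) : ℝ := fderiv ℝ f x (Pi.single i 1)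

/-- Gradient of a scalar field. -/
def grad3 (f : R3 → ℝ) (x : R3) : R3 := fun i => pd i f x

/-- Curl of a vector field. -/
def curl3 (w : R3 → R3) (x : R3) : R3 :=
  ![pd 1 (fun y => w y 2) x - pd 2 (fun y => w y 1) x,
    pd 2 (fun y => w y 0) x - pd 0 (fun y => w y 2) x,
    pd 0 (fun y => w y 1) x - pd 1 (fun y => w y 0) x]

/-- Divergence of a vector field. -/
def div3 (w : R3 → R3) (x : R3) : ℝ :=
  pd 0 (fun y => w y 0) x + pd 1 (fun y => w y 1) x + pd 2 (fun y => w y 2) x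

/-- Laplacian of a scalar field. -/
def lap3 (f : R3 → ℝ) (x : R3) : ℝ := div3 (grad3 f) x

/-!
Curl kills gradients, so `curl (f • ∇g) = ∇f × ∇g` and
`curl w = ∇θ × (cos θ ∇ℓ - sin θ ∇ψ)`. For the pairwise orthogonal frame
`u = ∇ℓ, v = ∇ψ, t = ∇θ` with Jacobian `J = u · (v × t)`, both `v × t` and `t × u` are parallel
to the remaining vector: `|u|² (v × t) = J u` and `|v|² (t × u) = J v`. Hence
`curl w = (J / |u|²) w`, and `J² = |u|² |v|² |t|² = (|u|² |α|)²` identifies `J / |u|²` with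
`sign J · |α|`.
-/

open Filter Topology

section Calculus

variable {f g : R3 → ℝ} {x : R3}

lemma pd_congr_of_eventuallyEq (h : f =ᶠ[𝓝 x] g) (i : Fin 3) : pd i f x = pd i g x := by
  rw [pd, pd, h.fderiv_eq]

lemma pd_add (hf : DifferentiableAt ℝ f x) (hg : DifferentiableAt ℝ g x) (i : Fin 3) :
    pd i (fun y => f y + g y) x = pd i f x + pd i g x := by
  simp [pd, fderiv_fun_add hf hg]

lemma pd_mul (hf : DifferentiableAt ℝ f x) (hg : DifferentiableAt ℝ g x) (i : Fin 3) :
    pd i (fun y => f y * g y) x = pd i f x * g x + f x * pd i g x := by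
  simp only [pd, fderiv_fun_mul hf hg, add_apply, smul_apply, smul_eq_mul]
  ring

lemma grad3_comp {F : ℝ → ℝ} {F' : ℝ} (hF : HasDerivAt F F' (f x))
    (hf : DifferentiableAt ℝ f x) : grad3 (fun y => F (f y)) x = F' • grad3 f x := by
  have h : HasFDerivAt (fun y => F (f y)) (F' • fderiv ℝ f x) x :=
    hF.comp_hasFDerivAt x hf.hasFDerivAt
  ext i
  simp [grad3, pd, h.fderiv]

lemma hasFDerivAt_pd (hg : ContDiffAt ℝ 2 g x) (i : Fin 3) :
    HasFDerivAt (pd i g) ((fderiv ℝ (fderiv ℝ g) x).flip (Pi.single i 1)) x := by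
  have hg' : DifferentiableAt ℝ (fderiv ℝ g) x :=
    (hg.fderiv_right (m := 1) (by norm_num)).differentiableAt one_ne_zero
  have h := hg'.hasFDerivAt.clm_apply (hasFDerivAt_const (Pi.single i 1 : R3) x)
  rwa [ContinuousLinearMap.comp_zero, zero_add] at h

lemma differentiableAt_pd (hg : ContDiffAt ℝ 2 g x) (i : Fin 3) :
    DifferentiableAt ℝ (pd i g) x :=
  (hasFDerivAt_pd hg i).differentiableAt

lemma pd_pd_comm (hg : ContDiffAt ℝ 2 g x) (i j : Fin 3) :
    pd i (pd j g) x = pd j (pd i g) x := by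
  simp only [pd, (hasFDerivAt_pd hg _).fderiv, ContinuousLinearMap.flip_apply]
  exact hg.isSymmSndFDerivAt (by simp) _ _

end Calculus

section Curl

variable {v w : R3 → R3} {f g : R3 → ℝ} {x : R3}

lemma curl3_congr_of_eventuallyEq (h : v =ᶠ[𝓝 x] w) : curl3 v x = curl3 w x := by
  have hc (i : Fin 3) : (fun y => v y i) =ᶠ[𝓝 x] fun y => w y i := h.fun_comp (· i)
  simp only [curl3, pd_congr_of_eventuallyEq (hc _)]

lemma curl3_add (hv : ∀ i, DifferentiableAt ℝ (fun y => v y i) x)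
    (hw : ∀ i, DifferentiableAt ℝ (fun y => w y i) x) :
    curl3 (fun y => v y + w y) x = curl3 v x + curl3 w x := by
  ext i
  fin_cases i <;>
  simp only [curl3, Pi.add_apply, pd_add (hv _) (hw _), Fin.isValue, Fin.zero_eta, Fin.mk_one, Fin.reduceFinMk, Matrix.cons_val_zero,
    Matrix.cons_val_one, Matrix.cons_val] <;> ring

lemma curl3_smul (hf : DifferentiableAt ℝ f x) (hv : ∀ i, DifferentiableAt ℝ (fun y => v y i) x) :
    curl3 (fun y => f y • v y) x = cross3 (grad3 f x) (v x) + f x • curl3 v x := by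
  ext i
  fin_cases i <;>
  simp only [curl3, cross3, grad3, Pi.add_apply, Pi.smul_apply, smul_eq_mul, pd_mul hf (hv _),
    Matrix.smul_cons, Matrix.smul_empty, Fin.isValue, Fin.zero_eta, Fin.mk_one, Fin.reduceFinMk, Matrix.cons_val_zero,
    Matrix.cons_val_one, Matrix.cons_val] <;> ring

lemma curl3_grad3 (hg : ContDiffAt ℝ 2 g x) : curl3 (grad3 g) x = 0 := by
  ext i
  fin_cases i <;> simp [curl3, grad3, pd_pd_comm hg]

lemma differentiableAt_smul_grad3_apply (hf : DifferentiableAt ℝ f x) (hg : ContDiffAt ℝ 2 g x)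
    (i : Fin 3) : DifferentiableAt ℝ (fun y => (f y • grad3 g y) i) x :=
  hf.mul (differentiableAt_pd hg i)

lemma curl3_smul_grad3 (hf : DifferentiableAt ℝ f x) (hg : ContDiffAt ℝ 2 g x) :
    curl3 (fun y => f y • grad3 g y) x = cross3 (grad3 f x) (grad3 g x) := by
  rw [curl3_smul (v := grad3 g) hf (differentiableAt_pd hg), curl3_grad3 hg, smul_zero, add_zero]

end Curl

section Algebra

variable {u v t : R3} {a : ℝ}

lemma norm3_sq (u : R3) : norm3 u ^ 2 = dot3 u u :=
  Real.sq_sqrt <| add_nonneg (add_nonneg (mul_self_nonneg _) (mul_self_nonneg _)) (mul_self_nonneg _)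

lemma dot3_comm (u v : R3) : dot3 u v = dot3 v u := by
  simp only [dot3]; ring

lemma dot3_cross3_cyclic (u v t : R3) : dot3 u (cross3 v t) = dot3 v (cross3 t u) := by
  simp only [dot3, cross3, Fin.isValue, Matrix.cons_val_zero, Matrix.cons_val_one, Matrix.cons_val]
  ring

lemma cross3_swap (u v : R3) : cross3 v u = -cross3 u v := by
  ext i
  fin_cases i <;> simp only [cross3, Pi.neg_apply, Fin.isValue, Fin.zero_eta, Fin.mk_one, Fin.reduceFinMk, Matrix.cons_val_zero,
    Matrix.cons_val_one, Matrix.cons_val] <;> ring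

lemma cross3_smul_left (a : ℝ) (u v : R3) : cross3 (a • u) v = a • cross3 u v := by
  ext i
  fin_cases i <;> simp only [cross3, Pi.smul_apply, smul_eq_mul, Fin.isValue, Fin.zero_eta, Fin.mk_one, Fin.reduceFinMk, Matrix.cons_val_zero,
    Matrix.cons_val_one, Matrix.cons_val] <;> ring

lemma dot3_cross3_self (v t : R3) :
    dot3 (cross3 v t) (cross3 v t) = dot3 v v * dot3 t t - dot3 v t ^ 2 := by
  simp only [dot3, cross3, Fin.isValue, Matrix.cons_val_zero, Matrix.cons_val_one, Matrix.cons_val]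
  ring

lemma dot3_self_smul_cross3 (huv : dot3 u v = 0) (hut : dot3 u t = 0) :
    dot3 u u • cross3 v t = dot3 u (cross3 v t) • u := by
  simp only [dot3] at huv hut
  ext i
  fin_cases i <;> simp only [dot3, cross3, Pi.smul_apply, smul_eq_mul, Fin.isValue, Fin.zero_eta, Fin.mk_one, Fin.reduceFinMk, Matrix.cons_val_zero,
    Matrix.cons_val_one, Matrix.cons_val]
  · linear_combination (u 2 * v 1 - u 1 * v 2) * hut + (u 1 * t 2 - u 2 * t 1) * huv
  · linear_combination (u 0 * v 2 - u 2 * v 0) * hut + (u 2 * t 0 - u 0 * t 2) * huv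
  · linear_combination (u 1 * v 0 - u 0 * v 1) * hut + (u 0 * t 1 - u 1 * t 0) * huv

lemma dot3_cross3_sq (huv : dot3 u v = 0) (hut : dot3 u t = 0) (hvt : dot3 v t = 0) :
    dot3 u (cross3 v t) ^ 2 = dot3 u u * dot3 v v * dot3 t t := by
  have h := congrArg (dot3 (cross3 v t)) (dot3_self_smul_cross3 huv hut)
  simp only [dot3, Pi.smul_apply, smul_eq_mul] at h
  have hl : dot3 (cross3 v t) (cross3 v t) = dot3 v v * dot3 t t := by
    rw [dot3_cross3_self, hvt]; ring
  simp only [dot3] at hl ⊢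
  linear_combination -h + (u 0 * u 0 + u 1 * u 1 + u 2 * u 2) * hl

lemma div_abs_mul_abs_eq_div_dot3_self (huv : dot3 u v = 0) (hut : dot3 u t = 0)
    (hvt : dot3 v t = 0) (hj : dot3 u (cross3 v t) ≠ 0) (hn : norm3 u = norm3 v)
    (he : norm3 t = |a|) :
    dot3 u (cross3 v t) / |dot3 u (cross3 v t)| * |a| = dot3 u (cross3 v t) / dot3 u u := by
  have hsq := dot3_cross3_sq huv hut hvt
  rw [← norm3_sq u, ← norm3_sq v, ← norm3_sq t, ← hn, he] at hsq
  have habs : |dot3 u (cross3 v t)| = norm3 u ^ 2 * |a| := by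
    rw [← sq_eq_sq₀ (abs_nonneg _) (by positivity), sq_abs, hsq]
    ring
  have hne : norm3 u ^ 2 * |a| ≠ 0 := habs ▸ abs_ne_zero.2 hj
  rw [habs, ← norm3_sq]
  field_simp [(mul_ne_zero_iff.1 hne).2]

lemma beltrami_identity (huv : dot3 u v = 0) (hut : dot3 u t = 0) (hvt : dot3 v t = 0)
    (hj : dot3 u (cross3 v t) ≠ 0) (hn : norm3 u = norm3 v) (he : norm3 t = |a|) (c s : ℝ) :
    cross3 (-s • t) v + cross3 (c • t) u =
      (dot3 u (cross3 v t) / |dot3 u (cross3 v t)| * |a|) • (c • v + s • u) := by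
  have hN : dot3 u u ≠ 0 := by
    intro h0
    apply hj
    simpa [h0] using dot3_cross3_sq huv hut hvt
  have hu : dot3 u u • cross3 v t = dot3 u (cross3 v t) • u := dot3_self_smul_cross3 huv hut
  have hv : dot3 u u • cross3 t u = dot3 u (cross3 v t) • v := by
    rw [← norm3_sq, hn, norm3_sq, dot3_cross3_cyclic]
    exact dot3_self_smul_cross3 hvt (by rwa [dot3_comm])
  rw [div_abs_mul_abs_eq_div_dot3_self huv hut hvt hj hn he, cross3_smul_left, cross3_smul_left,
    cross3_swap v t]
  ext i
  have hui := congrFun hu i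
  have hvi := congrFun hv i
  simp only [Pi.smul_apply, Pi.add_apply, Pi.neg_apply, smul_eq_mul] at hui hvi ⊢
  field_simp
  linear_combination s * hui + c * hvi

end Algebra

theorem beltrami_construction_general
    (Ω : Set R3) (hΩopen : IsOpen Ω)
    (ℓ ψ θ α : R3 → ℝ)
    (hℓ : ContDiffOn ℝ 2 ℓ Ω) (hψ : ContDiffOn ℝ 2 ψ Ω) (hθ : ContDiffOn ℝ 2 θ Ω)
    (horth1 : ∀ x ∈ Ω, dot3 (grad3 ℓ x) (grad3 ψ x) = 0)
    (horth2 : ∀ x ∈ Ω, dot3 (grad3 ℓ x) (grad3 θ x) = 0)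
    (horth3 : ∀ x ∈ Ω, dot3 (grad3 ψ x) (grad3 θ x) = 0)
    (hjac : ∀ x ∈ Ω, dot3 (grad3 ℓ x) (cross3 (grad3 ψ x) (grad3 θ x)) ≠ 0)
    (hnorm : ∀ x ∈ Ω, norm3 (grad3 ℓ x) = norm3 (grad3 ψ x))
    (heik : ∀ x ∈ Ω, norm3 (grad3 θ x) = |α x|)
    (w : R3 → R3)
    (hw : ∀ x ∈ Ω, w x = Real.cos (θ x) • grad3 ψ x + Real.sin (θ x) • grad3 ℓ x) :
    ∀ x ∈ Ω,
      curl3 w x =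
        ((dot3 (grad3 ℓ x) (cross3 (grad3 ψ x) (grad3 θ x)) /
            |dot3 (grad3 ℓ x) (cross3 (grad3 ψ x) (grad3 θ x))|) * |α x|) • w x := by
  intro x hx
  have hΩx : Ω ∈ 𝓝 x := hΩopen.mem_nhds hx
  have hℓx : ContDiffAt ℝ 2 ℓ x := hℓ.contDiffAt hΩx
  have hψx : ContDiffAt ℝ 2 ψ x := hψ.contDiffAt hΩx
  have hθx : DifferentiableAt ℝ θ x := (hθ.contDiffAt hΩx).differentiableAt two_ne_zero
  have hw_near : w =ᶠ[𝓝 x] fun y => Real.cos (θ y) • grad3 ψ y + Real.sin (θ y) • grad3 ℓ y :=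
    eventuallyEq_of_mem hΩx hw
  rw [curl3_congr_of_eventuallyEq hw_near,
    curl3_add (differentiableAt_smul_grad3_apply hθx.cos hψx)
      (differentiableAt_smul_grad3_apply hθx.sin hℓx),
    curl3_smul_grad3 hθx.cos hψx, curl3_smul_grad3 hθx.sin hℓx,
    grad3_comp (Real.hasDerivAt_cos _) hθx, grad3_comp (Real.hasDerivAt_sin _) hθx, hw x hx]
  exact beltrami_identity (horth1 x hx) (horth2 x hx) (horth3 x hx) (hjac x hx) (hnorm x hx)
    (heik x hx) _ _

/-- Construction of Beltrami fields from an orthogonal coordinate system: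
the field `w = cos θ ∇ψ + sin θ ∇ℓ`. -/
theorem beltrami_construction
    (Ω : Set R3) (hΩopen : IsOpen Ω) (hΩbdd : Bornology.IsBounded Ω)
    (ℓ ψ θ α : R3 → ℝ)
    (hℓ : ContDiffOn ℝ 2 ℓ Ω) (hψ : ContDiffOn ℝ 2 ψ Ω) (hθ : ContDiffOn ℝ 2 θ Ω)
    (hα : ContinuousOn α Ω)
    (horth1 : ∀ x ∈ Ω, dot3 (grad3 ℓ x) (grad3 ψ x) = 0)
    (horth2 : ∀ x ∈ Ω, dot3 (grad3 ℓ x) (grad3 θ x) = 0)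
    (horth3 : ∀ x ∈ Ω, dot3 (grad3 ψ x) (grad3 θ x) = 0)
    (hjac : ∀ x ∈ Ω, dot3 (grad3 ℓ x) (cross3 (grad3 ψ x) (grad3 θ x)) ≠ 0)
    (hnorm : ∀ x ∈ Ω, norm3 (grad3 ℓ x) = norm3 (grad3 ψ x))
    (heik : ∀ x ∈ Ω, norm3 (grad3 θ x) = |α x|)
    (w : R3 → R3)
    (hw : ∀ x ∈ Ω, w x = Real.cos (θ x) • grad3 ψ x + Real.sin (θ x) • grad3 ℓ x) :
    ∀ x ∈ Ω,
      curl3 w x =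
        ((dot3 (grad3 ℓ x) (cross3 (grad3 ψ x) (grad3 θ x)) /
            |dot3 (grad3 ℓ x) (cross3 (grad3 ψ x) (grad3 θ x))|) * |α x|) • w x :=
  beltrami_construction_general Ω hΩopen ℓ ψ θ α hℓ hψ hθ horth1 horth2 horth3 hjac hnorm heik w hw
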